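/- arXiv:2108.08198 — 4 statements merged into one kernel-verified Lean document; each statement's English description precedes it below -/
import Mathlib

section
/- PAC-Bayes deviation inequality: Let X₁,…,Xₙ be i.i.d. random variables on a space 𝒳, Θ ⊆ ℝ^p a parameter space with a prior probability measure μ, and f : 𝒳 × Θ → ℝ measurable with E_X[exp(f(X,θ))] < ∞ for all θ. Then with probability at least 1 − exp(−t), simultaneously for all probability measures ρ ≪ μ on Θ: (1/n)∑_{i=1}^n E_ρ[f(X_i, θ)] ≤ E_ρ[log E_X[exp(f(X, θ))]] + (KL(ρ, μ) + t)/n. -/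
/-!
For a fixed parameter `θ`, independence and identical distribution give
`E exp (∑ᵢ f (Xᵢ, θ) - n log E_ν exp (f (·, θ))) = 1`, so by Tonelli the prior average
`Z = ∫ exp (∑ᵢ f (Xᵢ, θ) - n log E_ν exp (f (·, θ))) dμ(θ)` has mean `1`, and Markov's inequality
gives `Z ≤ exp t` with probability at least `1 - exp (-t)`. On that event the Donsker–Varadhan
inequality `∫ g dρ ≤ KL(ρ, μ) + log ∫ exp g dμ` bounds the left-hand side for every `ρ` at once.
-/

open MeasureTheory ProbabilityTheory Real InformationTheory

open scoped ENNReal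

theorem MeasureTheory.Measure.AbsolutelyContinuous.neZero {α : Type*} [MeasurableSpace α]
    {μ ν : Measure α} [NeZero μ] (h : μ ≪ ν) : NeZero ν :=
  ⟨fun hν => NeZero.ne μ (Measure.measure_univ_eq_zero.mp (h (by simp [hν])))⟩

section ChangeOfMeasure

variable {α : Type*} [MeasurableSpace α] {μ ρ : Measure α} [SigmaFinite μ]
  [IsProbabilityMeasure ρ] {g : α → ℝ}

theorem integral_le_integral_llr_add_log_integral_exp (hρμ : ρ ≪ μ) (hgρ : Integrable g ρ)
    (hgμ : Integrable (fun x => exp (g x)) μ) (hllr : Integrable (llr ρ μ) ρ) :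
    ∫ x, g x ∂ρ ≤ ∫ x, llr ρ μ x ∂ρ + log (∫ x, exp (g x) ∂μ) := by
  have : NeZero μ := hρμ.neZero
  have : IsProbabilityMeasure (μ.tilted g) := isProbabilityMeasure_tilted hgμ
  -- Gibbs' inequality against the tilted measure `μ.tilted g`.
  have gibbs := integral_llr_add_sub_measure_univ_nonneg
    (hρμ.trans (absolutelyContinuous_tilted hgμ)) (integrable_llr_tilted_right hρμ hgρ hllr hgμ)
  rw [integral_llr_tilted_right hρμ hgρ hgμ hllr] at gibbs
  simp only [probReal_univ] at gibbs
  linarith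

theorem integral_le_integral_llr_add_of_lintegral_exp_le (hρμ : ρ ≪ μ) (hgρ : Integrable g ρ)
    (hgμ : AEStronglyMeasurable g μ) (hllr : Integrable (llr ρ μ) ρ) {t : ℝ}
    (hexp : ∫⁻ x, ENNReal.ofReal (exp (g x)) ∂μ ≤ ENNReal.ofReal (exp t)) :
    ∫ x, g x ∂ρ ≤ ∫ x, llr ρ μ x ∂ρ + t := by
  have : NeZero μ := hρμ.neZero
  have hexp_nonneg : 0 ≤ᵐ[μ] fun x => exp (g x) := ae_of_all _ fun x => (exp_pos _).le
  have hexp_meas : AEStronglyMeasurable (fun x => exp (g x)) μ :=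
    continuous_exp.comp_aestronglyMeasurable hgμ
  have hexp_int : Integrable (fun x => exp (g x)) μ :=
    ⟨hexp_meas, (hasFiniteIntegral_iff_ofReal hexp_nonneg).2 (hexp.trans_lt ENNReal.ofReal_lt_top)⟩
  have hlog : log (∫ x, exp (g x) ∂μ) ≤ t := by
    rw [log_le_iff_le_exp (integral_exp_pos hexp_int), integral_eq_lintegral_of_nonneg_ae
      hexp_nonneg hexp_meas]
    exact ENNReal.toReal_le_of_le_ofReal (exp_pos t).le hexp
  linarith [integral_le_integral_llr_add_log_integral_exp hρμ hgρ hexp_int hllr]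

end ChangeOfMeasure

theorem one_sub_inv_le_measure_le_of_lintegral_le_one {Ω : Type*} [MeasurableSpace Ω]
    {P : Measure Ω} [IsProbabilityMeasure P] {Z : Ω → ℝ≥0∞} (hZ : AEMeasurable Z P)
    (hZ_le : ∫⁻ ω, Z ω ∂P ≤ 1) (c : ℝ≥0∞) :
    1 - c⁻¹ ≤ P {ω | Z ω ≤ c} := by
  have markov : P {ω | c ≤ Z ω} ≤ c⁻¹ := by
    rw [ENNReal.le_inv_iff_mul_le, mul_comm]
    exact (mul_meas_ge_le_lintegral₀ hZ c).trans hZ_le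
  have hcompl : {ω | Z ω ≤ c}ᶜ ⊆ {ω | c ≤ Z ω} := fun ω (hω : ¬Z ω ≤ c) => (not_le.mp hω).le
  rw [tsub_le_iff_right]
  calc 1 = P Set.univ := measure_univ.symm
    _ ≤ P {ω | Z ω ≤ c} + P {ω | Z ω ≤ c}ᶜ := measure_univ_le_add_compl _
    _ ≤ P {ω | Z ω ≤ c} + c⁻¹ := by gcongr; exact (measure_mono hcompl).trans markov

section IID

variable {ι Ω 𝒳 : Type*} [Fintype ι] [MeasurableSpace Ω] [MeasurableSpace 𝒳] {P : Measure Ω}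
  {ν : Measure 𝒳} {X : ι → Ω → 𝒳}

theorem lintegral_prod_comp_eq_pow_of_iIndepFun (hX : ∀ i, Measurable (X i))
    (hindep : iIndepFun X P) (hident : ∀ i, P.map (X i) = ν) {h : 𝒳 → ℝ≥0∞} (hh : Measurable h) :
    ∫⁻ ω, ∏ i, h (X i ω) ∂P = (∫⁻ x, h x ∂ν) ^ Fintype.card ι := by
  refine (lintegral_prod_eq_prod_lintegral_of_indepFun Finset.univ (fun i ω => h (X i ω))
    (hindep.comp _ fun _ => hh) fun i => hh.comp (hX i)).trans ?_
  simp_rw [← lintegral_map hh (hX _), hident, Finset.prod_const, Finset.card_univ]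

theorem lintegral_exp_sum_sub_mul_log_integral_exp [NeZero ν]
    (hX : ∀ i, Measurable (X i)) (hindep : iIndepFun X P) (hident : ∀ i, P.map (X i) = ν)
    {g : 𝒳 → ℝ} (hg : Measurable g) (hg_exp : Integrable (fun x => exp (g x)) ν) :
    ∫⁻ ω, ENNReal.ofReal
      (exp (∑ i, g (X i ω) - Fintype.card ι * log (∫ x, exp (g x) ∂ν))) ∂P = 1 := by
  set I := ∫ x, exp (g x) ∂ν
  have hI : 0 < I := integral_exp_pos hg_exp
  have hsplit : ∀ ω, ENNReal.ofReal (exp (∑ i, g (X i ω) - Fintype.card ι * log I))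
      = (∏ i, ENNReal.ofReal (exp (g (X i ω)))) * (ENNReal.ofReal I)⁻¹ ^ Fintype.card ι := by
    intro ω
    rw [exp_sub, exp_sum, ← log_pow, exp_log (pow_pos hI _), ENNReal.ofReal_div_of_pos
      (pow_pos hI _), ENNReal.ofReal_prod_of_nonneg fun i _ => (exp_pos _).le,
      ENNReal.ofReal_pow hI.le, div_eq_mul_inv, ENNReal.inv_pow]
  have hlaw : ∫⁻ x, ENNReal.ofReal (exp (g x)) ∂ν = ENNReal.ofReal I :=
    (ofReal_integral_eq_lintegral_ofReal hg_exp (ae_of_all _ fun x => (exp_pos _).le)).symm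
  simp_rw [hsplit]
  rw [lintegral_mul_const _ (by fun_prop), lintegral_prod_comp_eq_pow_of_iIndepFun hX hindep hident
      (h := fun x => ENNReal.ofReal (exp (g x))) (by fun_prop), hlaw, ← mul_pow,
    ENNReal.mul_inv_cancel (by simpa using hI) ENNReal.ofReal_ne_top, one_pow]

variable {Θ : Type*} [MeasurableSpace Θ]

theorem measurable_log_integral_exp [SFinite ν] {f : 𝒳 → Θ → ℝ}
    (hf : Measurable (Function.uncurry f)) :
    Measurable fun θ => log (∫ x, exp (f x θ) ∂ν) :=
  (measurable_exp.comp (hf.comp measurable_swap)).stronglyMeasurable.integral_prod_right'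
    |>.measurable.log

theorem measurable_sum_sub_mul_log_integral_exp [SFinite ν] (hX : ∀ i, Measurable (X i))
    {f : 𝒳 → Θ → ℝ} (hf : Measurable (Function.uncurry f)) :
    Measurable fun q : Ω × Θ =>
      ∑ i, f (X i q.1) q.2 - Fintype.card ι * log (∫ x, exp (f x q.2) ∂ν) :=
  (Finset.measurable_sum _ fun i _ => hf.comp (((hX i).comp measurable_fst).prodMk
    measurable_snd)).sub (((measurable_log_integral_exp hf).comp measurable_snd).const_mul _)

theorem lintegral_lintegral_exp_sum_sub_mul_log_integral_exp [NeZero ν] [SFinite ν]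
    [SFinite P] (μ : Measure Θ) [SFinite μ] (hX : ∀ i, Measurable (X i)) (hindep : iIndepFun X P)
    (hident : ∀ i, P.map (X i) = ν) {f : 𝒳 → Θ → ℝ} (hf : Measurable (Function.uncurry f))
    (hexp : ∀ θ, Integrable (fun x => exp (f x θ)) ν) :
    ∫⁻ ω, ∫⁻ θ, ENNReal.ofReal
      (exp (∑ i, f (X i ω) θ - Fintype.card ι * log (∫ x, exp (f x θ) ∂ν))) ∂μ ∂P = μ Set.univ := by
  rw [lintegral_lintegral_swap
    (measurable_sum_sub_mul_log_integral_exp hX hf).exp.ennreal_ofReal.aemeasurable]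
  have h_inner (θ : Θ) : ∫⁻ ω, ENNReal.ofReal
      (exp (∑ i, f (X i ω) θ - Fintype.card ι * log (∫ x, exp (f x θ) ∂ν))) ∂P = 1 :=
    lintegral_exp_sum_sub_mul_log_integral_exp hX hindep hident
      (hf.comp (measurable_id.prodMk measurable_const)) (hexp θ)
  simp only [h_inner, lintegral_const, one_mul]

end IID

theorem pac_bayes_deviation_general {Ω 𝒳 : Type*} [MeasurableSpace Ω] [MeasurableSpace 𝒳]
    (P : Measure Ω) [IsProbabilityMeasure P]
    {p n : ℕ} (hn : 1 ≤ n)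
    (T : Set (Fin p → ℝ))
    (μ : Measure T) [IsProbabilityMeasure μ]
    (ν : Measure 𝒳) [IsProbabilityMeasure ν]
    (X : Fin n → Ω → 𝒳) (hX : ∀ i, Measurable (X i))
    (hindep : iIndepFun X P)
    (hident : ∀ i, Measure.map (X i) P = ν)
    (f : 𝒳 → T → ℝ) (hf : Measurable (Function.uncurry f))
    (hexp : ∀ θ : T, Integrable (fun x => Real.exp (f x θ)) ν)
    (t : ℝ) :
    ENNReal.ofReal (1 - Real.exp (-t)) ≤
      P {ω | ∀ ρ : Measure T, IsProbabilityMeasure ρ → ρ ≪ μ →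
        (∀ i, Integrable (fun θ => f (X i ω) θ) ρ) →
        Integrable (fun θ : T => Real.log (∫ x, Real.exp (f x θ) ∂ν)) ρ →
        Integrable (fun θ => Real.log ((ρ.rnDeriv μ θ).toReal)) ρ →
        (1 / (n : ℝ)) * ∑ i : Fin n, ∫ θ, f (X i ω) θ ∂ρ ≤
          (∫ θ : T, Real.log (∫ x, Real.exp (f x θ) ∂ν) ∂ρ) +
            ((∫ θ, Real.log ((ρ.rnDeriv μ θ).toReal) ∂ρ) + t) / n} := by
  set S : Ω → T → ℝ := fun ω θ => ∑ i, f (X i ω) θ - n * log (∫ x, exp (f x θ) ∂ν)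
  have hS : Measurable (Function.uncurry S) := by
    have h := measurable_sum_sub_mul_log_integral_exp (ν := ν) hX hf
    rwa [Fintype.card_fin] at h
  have hZ : ∫⁻ ω, ∫⁻ θ, ENNReal.ofReal (exp (S ω θ)) ∂μ ∂P ≤ 1 := by
    simpa using (lintegral_lintegral_exp_sum_sub_mul_log_integral_exp μ hX hindep hident hf
      hexp).le
  have hprob : ENNReal.ofReal (1 - exp (-t)) = 1 - (ENNReal.ofReal (exp t))⁻¹ := by
    rw [ENNReal.ofReal_sub _ (exp_pos _).le, ENNReal.ofReal_one, exp_neg,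
      ENNReal.ofReal_inv_of_pos (exp_pos t)]
  rw [hprob]
  refine (one_sub_inv_le_measure_le_of_lintegral_le_one
    (hS.exp.ennreal_ofReal.lintegral_prod_right' (ν := μ)).aemeasurable hZ _).trans
    (measure_mono fun ω hω ρ _ hρμ hf_int hL_int hllr => ?_)
  have hsum_int : Integrable (fun θ => ∑ i, f (X i ω) θ) ρ :=
    integrable_finsetSum _ fun i _ => hf_int i
  have hdv := integral_le_integral_llr_add_of_lintegral_exp_le (g := S ω) hρμ
    (hsum_int.sub (hL_int.const_mul _)) (hS.comp measurable_prodMk_left).aestronglyMeasurable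
    hllr hω
  rw [integral_sub hsum_int (hL_int.const_mul _), integral_finsetSum _ fun i _ => hf_int i,
    integral_const_mul, llr_def] at hdv
  have hn_pos : (0 : ℝ) < n := by exact_mod_cast hn
  rw [one_div, inv_mul_le_iff₀ hn_pos, mul_add, mul_div_cancel₀ _ hn_pos.ne']
  linarith

/-- PAC-Bayes deviation inequality: for i.i.d. data `X₁, …, Xₙ` with common law `ν`,
a prior `μ` on a parameter space `Θ ⊆ ℝ^p`, and a function `f` with finite
exponential moments, with probability at least `1 - exp (-t)`, simultaneously for
all posteriors `ρ ≪ μ`: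
`(1/n) ∑ᵢ E_ρ[f(Xᵢ, θ)] ≤ E_ρ[log E_X exp (f(X, θ))] + (KL(ρ, μ) + t)/n`. -/
theorem pac_bayes_deviation {Ω 𝒳 : Type*} [MeasurableSpace Ω] [MeasurableSpace 𝒳]
    (P : Measure Ω) [IsProbabilityMeasure P]
    {p n : ℕ} (hn : 1 ≤ n)
    (T : Set (Fin p → ℝ)) (hT : MeasurableSet T)
    (μ : Measure T) [IsProbabilityMeasure μ]
    (ν : Measure 𝒳) [IsProbabilityMeasure ν]
    (X : Fin n → Ω → 𝒳) (hX : ∀ i, Measurable (X i))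
    (hindep : iIndepFun X P)
    (hident : ∀ i, Measure.map (X i) P = ν)
    (f : 𝒳 → T → ℝ) (hf : Measurable (Function.uncurry f))
    (hexp : ∀ θ : T, Integrable (fun x => Real.exp (f x θ)) ν)
    (t : ℝ) (ht : 0 < t) :
    ENNReal.ofReal (1 - Real.exp (-t)) ≤
      P {ω | ∀ ρ : Measure T, IsProbabilityMeasure ρ → ρ ≪ μ →
        (∀ i, Integrable (fun θ => f (X i ω) θ) ρ) →
        Integrable (fun θ : T => Real.log (∫ x, Real.exp (f x θ) ∂ν)) ρ →
        Integrable (fun θ => Real.log ((ρ.rnDeriv μ θ).toReal)) ρ →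
        (1 / (n : ℝ)) * ∑ i : Fin n, ∫ θ, f (X i ω) θ ∂ρ ≤
          (∫ θ : T, Real.log (∫ x, Real.exp (f x θ) ∂ν) ∂ρ) +
            ((∫ θ, Real.log ((ρ.rnDeriv μ θ).toReal) ∂ρ) + t) / n} :=
  pac_bayes_deviation_general P hn T μ ν X hX hindep hident f hf hexp t
end

section
/- Let ψ(x) = x for x ∈ [−1,1] and ψ(x) = sign(x) for |x| > 1. For every real x, ψ(x) ≤ log(1 + x + x²). -/
open Real

lemma one_add_add_sq_pos (x : ℝ) : 0 < 1 + x + x ^ 2 := by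
  nlinarith [sq_nonneg (x + 1 / 2)]

-- On `[-1, 1]` the Taylor remainder `exp x - 1 - x` is at most `x ^ 2`.
lemma le_log_one_add_add_sq_of_abs_le_one {x : ℝ} (hx : |x| ≤ 1) :
    x ≤ log (1 + x + x ^ 2) := by
  rw [le_log_iff_exp_le (one_add_add_sq_pos x)]
  linarith [(abs_le.mp (abs_exp_sub_one_sub_id_le hx)).2]

lemma log_one_add_add_sq_nonneg_of_le_neg_one {x : ℝ} (hx : x ≤ -1) :
    0 ≤ log (1 + x + x ^ 2) :=
  log_nonneg (by nlinarith)

lemma one_le_log_one_add_add_sq_of_one_le {x : ℝ} (hx : 1 ≤ x) :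
    1 ≤ log (1 + x + x ^ 2) := by
  rw [le_log_iff_exp_le (one_add_add_sq_pos x)]
  nlinarith [exp_one_lt_three]

/-- The truncation function `ψ(x) = x` on `[-1,1]`, `ψ(x) = sign x` otherwise,
satisfies `ψ(x) ≤ log (1 + x + x²)` for all real `x`. -/
theorem trunc_le_log (x : ℝ) :
    (if |x| ≤ 1 then x else Real.sign x) ≤ Real.log (1 + x + x ^ 2) := by
  split_ifs with hx
  · exact le_log_one_add_add_sq_of_abs_le_one hx
  rcases lt_abs.mp (not_le.mp hx) with hgt | hlt
  · rw [sign_of_pos (by linarith)]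
    exact one_le_log_one_add_add_sq_of_one_le hgt.le
  · rw [sign_of_neg (by linarith)]
    linarith [log_one_add_add_sq_nonneg_of_le_neg_one (x := x) (by linarith)]
end

section
/- For any square-integrable random variable Z and any a > 0: E[log(1 + Z + Z²)] + a·E[min{1, Z²/6}] ≤ E[log(1 + Z + (1 + (7 + √6)(e^a − 1)/6)·Z²)]. -/
open MeasureTheory Real

/-! Pointwise, with `q = 1 + z + z²` and `m = min 1 (z²/6) ∈ [0, 1]`, convexity of `exp` gives
`q e^{a m} ≤ q + m q (e^a - 1)`, and `m q ≤ (7 + √6) z² / 6`; taking logarithms and integrating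
yields the bound. The constant `7 + √6` is sharp at `z = √6`, where both cases of `m` meet. -/

lemma exp_mul_le_one_add_mul_exp_sub_one {t : ℝ} (ht₀ : 0 ≤ t) (ht₁ : t ≤ 1) (a : ℝ) :
    exp (t * a) ≤ 1 + t * (exp a - 1) := by
  have h := convexOn_exp.2 (Set.mem_univ 0) (Set.mem_univ a) (sub_nonneg.2 ht₁) ht₀ (by ring)
  simp only [smul_eq_mul, mul_zero, zero_add, exp_zero, mul_one] at h
  linarith

lemma min_one_sq_div_six_mul_le (z : ℝ) :
    min 1 (z ^ 2 / 6) * (1 + z + z ^ 2) ≤ (7 + √6) / 6 * z ^ 2 := by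
  have hs : √6 ^ 2 = 6 := sq_sqrt (by norm_num)
  have hs₀ : 0 ≤ √6 := sqrt_nonneg 6
  rcases le_total (z ^ 2) 6 with h | h
  · have hz : z ≤ √6 := abs_le_of_sq_le_sq' (by linarith) hs₀ |>.2
    rw [min_eq_right (by linarith)]
    nlinarith [sq_nonneg z]
  · rw [min_eq_left (by linarith), one_mul]
    rcases le_total z 0 with hz | hz
    · nlinarith
    · have hz₆ : √6 ≤ z := by simpa [sqrt_sq hz] using sqrt_le_sqrt h
      -- `(1 + √6) z² - 6 z - 6 = (z - √6) ((1 + √6) z + √6)`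
      nlinarith [mul_nonneg (sub_nonneg.2 hz₆) (by positivity : 0 ≤ (1 + √6) * z + √6)]

lemma log_add_mul_min_le {a : ℝ} (ha : 0 ≤ a) (z : ℝ) :
    log (1 + z + z ^ 2) + a * min 1 (z ^ 2 / 6) ≤
      log (1 + z + (1 + (7 + √6) * (exp a - 1) / 6) * z ^ 2) := by
  set m := min 1 (z ^ 2 / 6)
  have hq : 0 < 1 + z + z ^ 2 := by nlinarith [sq_nonneg (z + 1 / 2)]
  have hm₀ : 0 ≤ m := le_min zero_le_one (by positivity)
  have hexp : 0 ≤ exp a - 1 := by linarith [add_one_le_exp a]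
  have hmq := min_one_sq_div_six_mul_le z
  calc log (1 + z + z ^ 2) + a * m = log ((1 + z + z ^ 2) * exp (m * a)) := by
        rw [log_mul hq.ne' (exp_ne_zero _), log_exp, mul_comm]
    _ ≤ log ((1 + z + z ^ 2) * (1 + m * (exp a - 1))) :=
        log_le_log (by positivity) <| mul_le_mul_of_nonneg_left
          (exp_mul_le_one_add_mul_exp_sub_one hm₀ (min_le_left _ _) a) hq.le
    _ ≤ log (1 + z + (1 + (7 + √6) * (exp a - 1) / 6) * z ^ 2) :=
        log_le_log (mul_pos hq (by nlinarith [mul_nonneg hm₀ hexp]))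
          (by nlinarith [mul_le_mul_of_nonneg_right hmq hexp])

theorem trunc_log_exp_bound_general {Ω : Type*} [MeasurableSpace Ω] (μ : Measure Ω)
    [IsProbabilityMeasure μ] (Z : Ω → ℝ)
    (hZ2 : Integrable (fun ω => (Z ω) ^ 2) μ)
    (a : ℝ) (ha : 0 < a)
    (hlog1 : Integrable (fun ω => Real.log (1 + Z ω + (Z ω) ^ 2)) μ)
    (hlog2 : Integrable (fun ω =>
      Real.log (1 + Z ω + (1 + (7 + Real.sqrt 6) * (Real.exp a - 1) / 6) * (Z ω) ^ 2)) μ) :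
    (∫ ω, Real.log (1 + Z ω + (Z ω) ^ 2) ∂μ) +
        a * ∫ ω, min 1 ((Z ω) ^ 2 / 6) ∂μ ≤
      ∫ ω, Real.log (1 + Z ω + (1 + (7 + Real.sqrt 6) * (Real.exp a - 1) / 6) * (Z ω) ^ 2) ∂μ := by
  have hmin : Integrable (fun ω => min 1 ((Z ω) ^ 2 / 6)) μ :=
    (integrable_const 1).inf (hZ2.div_const 6)
  rw [← integral_const_mul, ← integral_add hlog1 (hmin.const_mul a)]
  exact integral_mono (hlog1.add (hmin.const_mul a)) hlog2 fun ω => log_add_mul_min_le ha.le (Z ω)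

/-- For any square-integrable random variable `Z` and any `a > 0`:
`E[log (1 + Z + Z²)] + a E[min{1, Z²/6}]
  ≤ E[log (1 + Z + (1 + (7 + √6)(e^a − 1)/6) Z²)]`. -/
theorem trunc_log_exp_bound {Ω : Type*} [MeasurableSpace Ω] (μ : Measure Ω)
    [IsProbabilityMeasure μ] (Z : Ω → ℝ) (hZ : Measurable Z)
    (hZ2 : Integrable (fun ω => (Z ω) ^ 2) μ)
    (a : ℝ) (ha : 0 < a)
    (hlog1 : Integrable (fun ω => Real.log (1 + Z ω + (Z ω) ^ 2)) μ)
    (hlog2 : Integrable (fun ω =>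
      Real.log (1 + Z ω + (1 + (7 + Real.sqrt 6) * (Real.exp a - 1) / 6) * (Z ω) ^ 2)) μ) :
    (∫ ω, Real.log (1 + Z ω + (Z ω) ^ 2) ∂μ) +
        a * ∫ ω, min 1 ((Z ω) ^ 2 / 6) ∂μ ≤
      ∫ ω, Real.log (1 + Z ω + (1 + (7 + Real.sqrt 6) * (Real.exp a - 1) / 6) * (Z ω) ^ 2) ∂μ :=
  trunc_log_exp_bound_general μ Z hZ2 a ha hlog1 hlog2
end

section
/- KL divergence of a truncated Gaussian from a Gaussian: Let μ be the N(0, β^{−1}Σ) distribution on ℝ^d (Σ positive definite, β > 0), and let u ∈ Σ^{1/2}S^{d−1}. Let ρ_u be the measure with density proportional to the N(u, β^{−1}Σ) density restricted to {x : ‖x − u‖ ≤ r}, with normalization constant p = Pr(‖Z‖ ≤ r) for Z ~ N(0, β^{−1}Σ). Then KL(ρ_u, μ) = log(1/p) + β/2. -/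
open MeasureTheory Matrix Real

/-- KL divergence of a truncated Gaussian from a Gaussian: if `μ = N(0, β⁻¹Σ)` with
density `g`, `u ∈ Σ^{1/2} S^{d-1}` (i.e. `uᵀΣ⁻¹u = 1`), and `ρ_u` has density
`f`, the `N(u, β⁻¹Σ)` density restricted to the ball `{‖x - u‖ ≤ r}` and
renormalized by `p`, then `KL(ρ_u, μ) = ∫ log (f/g) dρ_u = log (1/p) + β/2`. -/
theorem kl_truncated_gaussian {d : ℕ} (Sg : Matrix (Fin d) (Fin d) ℝ)
    (hSg : Sg.PosDef) (β r p : ℝ) (hβ : 0 < β) (hr : 0 < r) (hp : 0 < p)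
    (u : Fin d → ℝ) (hu : u ⬝ᵥ (Sg⁻¹).mulVec u = 1)
    (g f : (Fin d → ℝ) → ℝ)
    (hg : ∀ x, g x = (Real.sqrt ((2 * Real.pi) ^ d * (β⁻¹ • Sg).det))⁻¹ *
        Real.exp (-(x ⬝ᵥ (β • Sg⁻¹).mulVec x) / 2))
    (hf : ∀ x, f x = Set.indicator {y : Fin d → ℝ | (y - u) ⬝ᵥ (y - u) ≤ r ^ 2}
        (fun x => p⁻¹ * (Real.sqrt ((2 * Real.pi) ^ d * (β⁻¹ • Sg).det))⁻¹ *
          Real.exp (-((x - u) ⬝ᵥ (β • Sg⁻¹).mulVec (x - u)) / 2)) x)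
    (hpval : p = ∫ x in {y : Fin d → ℝ | (y - u) ⬝ᵥ (y - u) ≤ r ^ 2},
        (Real.sqrt ((2 * Real.pi) ^ d * (β⁻¹ • Sg).det))⁻¹ *
          Real.exp (-((x - u) ⬝ᵥ (β • Sg⁻¹).mulVec (x - u)) / 2)) :
    ∫ x : Fin d → ℝ, Real.log (f x / g x) * f x = Real.log (1 / p) + β / 2 := by
  set c : ℝ := (Real.sqrt ((2 * Real.pi) ^ d * (β⁻¹ • Sg).det))⁻¹ with hc
  set A : Matrix (Fin d) (Fin d) ℝ := β • Sg⁻¹ with hA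
  have hdet : 0 < (β⁻¹ • Sg).det := by
    rw [Matrix.det_smul]
    exact mul_pos (pow_pos (inv_pos.mpr hβ) _) hSg.det_pos
  have hcpos : 0 < c := by
    rw [hc]
    have : 0 < (2 * Real.pi) ^ d * (β⁻¹ • Sg).det := by positivity
    positivity
  have hAsymm : Aᵀ = A := by
    rw [hA, Matrix.transpose_smul]
    congr 1
    exact hSg.isHermitian.inv
  have hsymm : ∀ v w : Fin d → ℝ, v ⬝ᵥ A.mulVec w = w ⬝ᵥ A.mulVec v := by
    intro v w
    rw [Matrix.dotProduct_mulVec, ← Matrix.mulVec_transpose, hAsymm, dotProduct_comm]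
  have huAu : u ⬝ᵥ A.mulVec u = β := by
    rw [hA, Matrix.smul_mulVec, dotProduct_smul, hu, smul_eq_mul, mul_one]
  have hkey : ∀ x : Fin d → ℝ, x ⬝ᵥ A.mulVec x =
      (x - u) ⬝ᵥ A.mulVec (x - u) + 2 * (u ⬝ᵥ A.mulVec (x - u)) + β := by
    intro x
    have hx : x = (x - u) + u := by ring
    calc x ⬝ᵥ A.mulVec x = ((x - u) + u) ⬝ᵥ A.mulVec ((x - u) + u) := by rw [← hx]
      _ = (x - u) ⬝ᵥ A.mulVec (x - u) + (x - u) ⬝ᵥ A.mulVec u + (u ⬝ᵥ A.mulVec (x - u)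
          + u ⬝ᵥ A.mulVec u) := by
        rw [Matrix.mulVec_add, add_dotProduct, dotProduct_add,
          dotProduct_add]
      _ = (x - u) ⬝ᵥ A.mulVec (x - u) + 2 * (u ⬝ᵥ A.mulVec (x - u)) + β := by
        rw [hsymm (x - u) u, huAu]; ring
  set B : Set (Fin d → ℝ) := {y : Fin d → ℝ | (y - u) ⬝ᵥ (y - u) ≤ r ^ 2} with hB
  have hBclosed : IsClosed B := by
    apply isClosed_le _ continuous_const
    exact (continuous_id.sub continuous_const).dotProduct
      (continuous_id.sub continuous_const)
  have hBm : MeasurableSet B := hBclosed.measurableSet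
  have hBc : IsCompact B := by
    apply Metric.isCompact_of_isClosed_isBounded hBclosed
    rw [Metric.isBounded_iff_subset_closedBall u]
    refine ⟨r, fun y hy => ?_⟩
    simp only [Metric.mem_closedBall, dist_eq_norm]
    rw [pi_norm_le_iff_of_nonneg hr.le]
    intro i
    have hy' : (y - u) ⬝ᵥ (y - u) ≤ r ^ 2 := hy
    have h1 : (y - u) i * (y - u) i ≤ r ^ 2 :=
      le_trans (Finset.single_le_sum (f := fun j => (y - u) j * (y - u) j)
        (fun j _ => mul_self_nonneg _) (Finset.mem_univ i)) hy'
    have h2 : ((y - u) i) ^ 2 ≤ r ^ 2 := by nlinarith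
    simpa using abs_le_of_sq_le_sq h2 hr.le
  set W : (Fin d → ℝ) → ℝ := fun x => c * Real.exp (-((x - u) ⬝ᵥ A.mulVec (x - u)) / 2)
    with hW
  have hWcont : Continuous W := by
    apply continuous_const.mul
    apply Real.continuous_exp.comp
    apply Continuous.div_const
    apply Continuous.neg
    exact (continuous_id.sub continuous_const).dotProduct
      (continuous_const.matrix_mulVec (continuous_id.sub continuous_const))
  set C : ℝ := Real.log p⁻¹ + β / 2 with hC
  set L : (Fin d → ℝ) → ℝ := fun x => u ⬝ᵥ A.mulVec (x - u) with hL
  have hLcont : Continuous L :=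
    continuous_const.dotProduct
      (continuous_const.matrix_mulVec (continuous_id.sub continuous_const))
  -- Step 1: pointwise identity
  have h1 : ∀ x : Fin d → ℝ, Real.log (f x / g x) * f x =
      B.indicator (fun x => C * (p⁻¹ * W x) + L x * (p⁻¹ * W x)) x := by
    intro x
    by_cases hx : x ∈ B
    · rw [Set.indicator_of_mem hx, hf x, Set.indicator_of_mem hx, hg x]
      set e1 : ℝ := -((x - u) ⬝ᵥ A.mulVec (x - u)) / 2 with he1
      set e2 : ℝ := -(x ⬝ᵥ A.mulVec x) / 2 with he2
      have hdiv : p⁻¹ * c * Real.exp e1 / (c * Real.exp e2)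
          = p⁻¹ * Real.exp (e1 - e2) := by
        rw [Real.exp_sub]
        field_simp
      rw [hdiv, Real.log_mul (inv_ne_zero hp.ne') (Real.exp_ne_zero _), Real.log_exp]
      have he : e1 - e2 = L x + β / 2 := by
        rw [he1, he2, hkey x, hL]
        ring
      rw [he, hW, hC]
      ring
    · rw [Set.indicator_of_notMem hx, hf x, Set.indicator_of_notMem hx, mul_zero]
  -- integrability
  have hInt1 : IntegrableOn (fun x => C * (p⁻¹ * W x)) B volume :=
    ((continuous_const.mul (continuous_const.mul hWcont)).continuousOn).integrableOn_compact hBc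
  have hInt2 : IntegrableOn (fun x => L x * (p⁻¹ * W x)) B volume :=
    ((hLcont.mul (continuous_const.mul hWcont)).continuousOn).integrableOn_compact hBc
  have hpInt : ∫ x in B, W x = p := hpval.symm
  -- Step 5: odd part vanishes
  have h5 : ∫ x in B, L x * (p⁻¹ * W x) = 0 := by
    set G : (Fin d → ℝ) → ℝ := fun y => Set.indicator {y : Fin d → ℝ | y ⬝ᵥ y ≤ r ^ 2}
      (fun y => (u ⬝ᵥ A.mulVec y) * (p⁻¹ * (c * Real.exp (-(y ⬝ᵥ A.mulVec y) / 2)))) y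
      with hG
    have hGx : ∀ x : Fin d → ℝ, B.indicator (fun x => L x * (p⁻¹ * W x)) x = G (x - u) := by
      intro x
      simp only [hG]
      by_cases hx : x ∈ B
      · have hx' : x - u ∈ {y : Fin d → ℝ | y ⬝ᵥ y ≤ r ^ 2} := hx
        rw [Set.indicator_of_mem hx, Set.indicator_of_mem hx']
      · have hx' : x - u ∉ {y : Fin d → ℝ | y ⬝ᵥ y ≤ r ^ 2} := hx
        rw [Set.indicator_of_notMem hx, Set.indicator_of_notMem hx']
    have hGodd : ∀ y : Fin d → ℝ, G (-y) = -G y := by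
      intro y
      have hmem : (-y) ⬝ᵥ (-y) = y ⬝ᵥ y := by
        rw [neg_dotProduct, dotProduct_neg, neg_neg]
      simp only [hG]
      by_cases hy : y ∈ {y : Fin d → ℝ | y ⬝ᵥ y ≤ r ^ 2}
      · have hy' : -y ∈ {y : Fin d → ℝ | y ⬝ᵥ y ≤ r ^ 2} := by
          show (-y) ⬝ᵥ (-y) ≤ r ^ 2
          rw [hmem]; exact hy
        rw [Set.indicator_of_mem hy', Set.indicator_of_mem hy]
        rw [Matrix.mulVec_neg, dotProduct_neg, neg_dotProduct,
          dotProduct_neg, neg_neg]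
        ring
      · have hy' : -y ∉ {y : Fin d → ℝ | y ⬝ᵥ y ≤ r ^ 2} := by
          show ¬ (-y) ⬝ᵥ (-y) ≤ r ^ 2
          rw [hmem]; exact hy
        rw [Set.indicator_of_notMem hy', Set.indicator_of_notMem hy, neg_zero]
    have e1 : ∫ x in B, L x * (p⁻¹ * W x)
        = ∫ x : Fin d → ℝ, B.indicator (fun x => L x * (p⁻¹ * W x)) x :=
      (integral_indicator hBm).symm
    have e2 : ∫ x : Fin d → ℝ, B.indicator (fun x => L x * (p⁻¹ * W x)) x
        = ∫ x : Fin d → ℝ, G (x - u) := by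
      exact integral_congr_ae (Filter.Eventually.of_forall hGx)
    have e3 : ∫ x : Fin d → ℝ, G (x - u) = ∫ y : Fin d → ℝ, G y :=
      integral_sub_right_eq_self G u
    have e4 : ∫ y : Fin d → ℝ, G y = - ∫ y : Fin d → ℝ, G y := by
      conv_lhs => rw [← integral_neg_eq_self G volume]
      rw [← integral_neg]
      exact integral_congr_ae (Filter.Eventually.of_forall hGodd)
    have : ∫ y : Fin d → ℝ, G y = 0 := by linarith
    rw [e1, e2, e3, this]
  -- assemble
  calc ∫ x : Fin d → ℝ, Real.log (f x / g x) * f x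
      = ∫ x : Fin d → ℝ, B.indicator (fun x => C * (p⁻¹ * W x) + L x * (p⁻¹ * W x)) x :=
        integral_congr_ae (Filter.Eventually.of_forall h1)
    _ = ∫ x in B, (C * (p⁻¹ * W x) + L x * (p⁻¹ * W x)) := integral_indicator hBm
    _ = (∫ x in B, C * (p⁻¹ * W x)) + ∫ x in B, L x * (p⁻¹ * W x) :=
        integral_add hInt1 hInt2
    _ = (C * p⁻¹) * (∫ x in B, W x) + 0 := by
        rw [h5]
        congr 1
        rw [← integral_const_mul]
        exact integral_congr_ae (Filter.Eventually.of_forall fun x => by ring)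
    _ = Real.log (1 / p) + β / 2 := by
        rw [hpInt, add_zero, hC, one_div]
        field_simp
end
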